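/- Existence of an i-FOCS basis (assuming the real canonical form): let A, H be real n×n matrices with H symmetric invertible and A H-selfadjoint, and suppose there exists a real invertible R with R^{-1} A R = J_R and R^T H R = P (the real canonical form). Then there exists a complex invertible N with N^{-1} A N = J (the complex Jordan form with conjugate blocks paired), N* H N = P, and N is i-conjugate symmetric: for each non-real block, the Jordan chain at conj(λ) is i times the entrywise conjugate of the Jordan chain at λ. -/

import Mathlib

/-!
Write the coordinates of a pair of conjugate blocks of size `m` as `Fin m × Fin 2` in two ways:
interleaved, `(a, b) ↦ 2a + b`, as in `J_R`, and stacked, `(a, s) ↦ a + m s`, as in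
`J_m(λ) ⊕ J_m(conj λ)`. With `Z` the nilpotent shift, the real block is then
`Z ⊗ 1 + 1 ⊗ [[Re λ, Im λ], [-Im λ, Re λ]]`, the complex pair is `Z ⊗ 1 + 1 ⊗ diag(λ, conj λ)`,
and the sip matrix is `sip ⊗ sip` in both coordinate systems. The unitary
`U = (1/√2) [[1, i], [i, 1]]` diagonalizes the `2×2` block, satisfies `Uᴴ sip U = sip`, and its
second column is `i` times the conjugate of its first. Hence `S = 1 ⊕ ⨁ₖ (1 ⊗ U)` satisfies
`J_R S = S J`, `Sᴴ P S = P` and is `i`-conjugate symmetric, and since `R` is real, so is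
`N = R S`.
-/

open Matrix Complex

/-- Index type for a canonical form with `α` real Jordan blocks of sizes `p k`
and `β'` pairs of non-real conjugate blocks, each pair of total size `2 * q k`. -/
abbrev JordanIdx (α β' : ℕ) (p : Fin α → ℕ) (q : Fin β' → ℕ) : Type :=
  (Σ k : Fin α, Fin (p k)) ⊕ (Σ k : Fin β', Fin (2 * q k))

/-- The real Jordan canonical form `J_R`: real Jordan blocks `J(μ k)` followed by real
canonical blocks built from `2×2` blocks `[[σ,τ],[-τ,σ]]` with identity superdiagonal. -/
noncomputable def realJordanForm (α β' : ℕ) (p : Fin α → ℕ) (q : Fin β' → ℕ)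
    (μ : Fin α → ℝ) (lam : Fin β' → ℂ) :
    Matrix (JordanIdx α β' p q) (JordanIdx α β' p q) ℂ :=
  Matrix.of fun i j =>
    match i, j with
    | Sum.inl ⟨k, i⟩, Sum.inl ⟨k', i'⟩ =>
        if k = k' ∧ (i':ℕ) = (i:ℕ) then (μ k : ℂ)
        else if k = k' ∧ (i':ℕ) = (i:ℕ)+1 then 1 else 0
    | Sum.inr ⟨k, i⟩, Sum.inr ⟨k', i'⟩ =>
        if k = k' then
          (if (i':ℕ) = (i:ℕ) then ((lam k).re : ℂ)
           else if (i:ℕ) % 2 = 0 ∧ (i':ℕ) = (i:ℕ)+1 then ((lam k).im : ℂ)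
           else if (i:ℕ) % 2 = 1 ∧ (i':ℕ)+1 = (i:ℕ) then -((lam k).im : ℂ)
           else if (i':ℕ) = (i:ℕ)+2 then 1 else 0)
        else 0
    | _, _ => 0

/-- The complex Jordan canonical form `J`: Jordan blocks `J(μ k)` at the real eigenvalues,
and for each non-real `lam k` the pair `J(lam k) ⊕ J(conj (lam k))` of blocks of size `q k`. -/
noncomputable def complexJordanForm (α β' : ℕ) (p : Fin α → ℕ) (q : Fin β' → ℕ)
    (μ : Fin α → ℝ) (lam : Fin β' → ℂ) :
    Matrix (JordanIdx α β' p q) (JordanIdx α β' p q) ℂ :=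
  Matrix.of fun i j =>
    match i, j with
    | Sum.inl ⟨k, i⟩, Sum.inl ⟨k', i'⟩ =>
        if k = k' ∧ (i':ℕ) = (i:ℕ) then (μ k : ℂ)
        else if k = k' ∧ (i':ℕ) = (i:ℕ)+1 then 1 else 0
    | Sum.inr ⟨k, i⟩, Sum.inr ⟨k', i'⟩ =>
        if k = k' then
          (if (i':ℕ) = (i:ℕ) then (if (i:ℕ) < q k then lam k else (starRingEnd ℂ) (lam k))
           else if (i':ℕ) = (i:ℕ)+1 ∧ (i:ℕ)+1 ≠ q k then 1 else 0)
        else 0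
    | _, _ => 0

/-- The matrix `P`: a direct sum of sip matrices `ε k • ĩ` (for the real blocks)
and sip matrices `ĩ` (for the pairs of non-real conjugate blocks). -/
noncomputable def sipForm (α β' : ℕ) (p : Fin α → ℕ) (q : Fin β' → ℕ) (ε : Fin α → ℝ) :
    Matrix (JordanIdx α β' p q) (JordanIdx α β' p q) ℂ :=
  Matrix.of fun i j =>
    match i, j with
    | Sum.inl ⟨k, i⟩, Sum.inl ⟨k', i'⟩ =>
        if k = k' ∧ (i:ℕ) + (i':ℕ) = p k - 1 then (ε k : ℂ) else 0
    | Sum.inr ⟨k, i⟩, Sum.inr ⟨k', i'⟩ =>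
        if k = k' ∧ (i:ℕ) + (i':ℕ) = 2 * q k - 1 then 1 else 0
    | _, _ => 0

open scoped Kronecker

def interleaveEquiv (m : ℕ) : Fin m × Fin 2 ≃ Fin (2 * m) :=
  finProdFinEquiv.trans (finCongr (mul_comm m 2))

def stackEquiv (m : ℕ) : Fin m × Fin 2 ≃ Fin (2 * m) :=
  (Equiv.prodComm _ _).trans finProdFinEquiv

@[simp] lemma interleaveEquiv_apply_val (m : ℕ) (x : Fin m × Fin 2) :
    (interleaveEquiv m x : ℕ) = 2 * x.1 + x.2 := by
  simp [interleaveEquiv]; ring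

@[simp] lemma stackEquiv_apply_val (m : ℕ) (x : Fin m × Fin 2) :
    (stackEquiv m x : ℕ) = x.1 + m * x.2 := by
  simp [stackEquiv]

section
variable {R : Type*} [Semiring R]

def shiftMatrix (n : ℕ) : Matrix (Fin n) (Fin n) R :=
  of fun i j => if (j : ℕ) = i + 1 then 1 else 0

def sip (n : ℕ) : Matrix (Fin n) (Fin n) R :=
  of fun i j => if (i : ℕ) + j = n - 1 then 1 else 0

lemma sip_eq_kronecker_interleaveEquiv (m : ℕ) :
    (sip (2 * m) : Matrix _ _ R) =
      (sip m ⊗ₖ sip 2).submatrix (interleaveEquiv m).symm (interleaveEquiv m).symm := by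
  ext i j
  obtain ⟨⟨a, b⟩, rfl⟩ := (interleaveEquiv m).surjective i
  obtain ⟨⟨a', b'⟩, rfl⟩ := (interleaveEquiv m).surjective j
  fin_cases b <;> fin_cases b' <;> simp [sip] <;> grind

lemma sip_eq_kronecker_stackEquiv (m : ℕ) :
    (sip (2 * m) : Matrix _ _ R) =
      (sip m ⊗ₖ sip 2).submatrix (stackEquiv m).symm (stackEquiv m).symm := by
  ext i j
  obtain ⟨⟨a, b⟩, rfl⟩ := (stackEquiv m).surjective i
  obtain ⟨⟨a', b'⟩, rfl⟩ := (stackEquiv m).surjective j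
  fin_cases b <;> fin_cases b' <;> simp [sip] <;> grind
end

noncomputable def realCanonicalBlock (l : ℂ) : Matrix (Fin 2) (Fin 2) ℂ :=
  !![(l.re : ℂ), l.im; -l.im, l.re]

noncomputable def pairDiagonalizer : Matrix (Fin 2) (Fin 2) ℂ :=
  (Real.sqrt 2 : ℂ)⁻¹ • !![1, I; I, 1]

lemma realCanonicalBlock_mul_pairDiagonalizer (l : ℂ) :
    realCanonicalBlock l * pairDiagonalizer =
      pairDiagonalizer * diagonal ![l, (starRingEnd ℂ) l] := by
  ext i j
  fin_cases i <;> fin_cases j <;>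
    simp [realCanonicalBlock, pairDiagonalizer, mul_apply, Fin.sum_univ_two] <;>
    apply Complex.ext <;> simp <;> ring

lemma pairDiagonalizer_mul_conjTranspose : pairDiagonalizer * pairDiagonalizerᴴ = 1 := by
  ext i j
  fin_cases i <;> fin_cases j <;>
    simp [pairDiagonalizer, mul_apply, Fin.sum_univ_two, Complex.ext_iff] <;>
    ring_nf <;> norm_num

lemma pairDiagonalizer_conjTranspose_mul_sip :
    pairDiagonalizerᴴ * sip 2 * pairDiagonalizer = sip 2 := by
  ext i j
  fin_cases i <;> fin_cases j <;>
    simp [pairDiagonalizer, sip, mul_apply, Fin.sum_univ_two, Complex.ext_iff] <;>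
    ring_nf <;> norm_num

lemma pairDiagonalizer_apply_one (b : Fin 2) :
    pairDiagonalizer b 1 = I * (starRingEnd ℂ) (pairDiagonalizer b 0) := by
  fin_cases b <;> simp [pairDiagonalizer] <;> apply Complex.ext <;> simp

noncomputable def realPairBlock (m : ℕ) (l : ℂ) : Matrix (Fin (2 * m)) (Fin (2 * m)) ℂ :=
  (shiftMatrix m ⊗ₖ 1 + 1 ⊗ₖ realCanonicalBlock l).submatrix (interleaveEquiv m).symm
    (interleaveEquiv m).symm

noncomputable def complexPairBlock (m : ℕ) (l : ℂ) : Matrix (Fin (2 * m)) (Fin (2 * m)) ℂ :=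
  (shiftMatrix m ⊗ₖ 1 + 1 ⊗ₖ diagonal ![l, (starRingEnd ℂ) l]).submatrix (stackEquiv m).symm
    (stackEquiv m).symm

noncomputable def interleavingBlock (m : ℕ) : Matrix (Fin (2 * m)) (Fin (2 * m)) ℂ :=
  (1 ⊗ₖ pairDiagonalizer).submatrix (interleaveEquiv m).symm (stackEquiv m).symm

lemma realPairBlock_mul_interleavingBlock (m : ℕ) (l : ℂ) :
    realPairBlock m l * interleavingBlock m = interleavingBlock m * complexPairBlock m l := by
  rw [realPairBlock, complexPairBlock, interleavingBlock, submatrix_mul_equiv,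
    submatrix_mul_equiv, add_mul, mul_add, ← mul_kronecker_mul, ← mul_kronecker_mul,
    ← mul_kronecker_mul, ← mul_kronecker_mul, realCanonicalBlock_mul_pairDiagonalizer]
  simp only [Matrix.one_mul, Matrix.mul_one]

lemma interleavingBlock_mul_conjTranspose (m : ℕ) :
    interleavingBlock m * (interleavingBlock m)ᴴ = 1 := by
  rw [interleavingBlock, conjTranspose_submatrix, submatrix_mul_equiv, conjTranspose_kronecker,
    ← mul_kronecker_mul, pairDiagonalizer_mul_conjTranspose, conjTranspose_one, Matrix.one_mul,
    one_kronecker_one, submatrix_one_equiv]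

lemma interleavingBlock_conjTranspose_mul_sip_mul (m : ℕ) :
    (interleavingBlock m)ᴴ * sip (2 * m) * interleavingBlock m = sip (2 * m) := by
  conv_rhs => rw [sip_eq_kronecker_stackEquiv]
  rw [interleavingBlock, conjTranspose_submatrix, sip_eq_kronecker_interleaveEquiv,
    submatrix_mul_equiv, submatrix_mul_equiv, conjTranspose_kronecker, ← mul_kronecker_mul,
    ← mul_kronecker_mul, pairDiagonalizer_conjTranspose_mul_sip, conjTranspose_one,
    Matrix.one_mul, Matrix.mul_one]

lemma interleavingBlock_apply_add (m : ℕ) (r : Fin (2 * m)) (a : Fin m) :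
    interleavingBlock m r (Fin.cast (two_mul m).symm (Fin.natAdd m a)) =
      I * (starRingEnd ℂ)
        (interleavingBlock m r (Fin.cast (two_mul m).symm (Fin.castAdd m a))) := by
  have h₁ : Fin.cast (two_mul m).symm (Fin.natAdd m a) = stackEquiv m (a, 1) :=
    Fin.ext (by simp [add_comm])
  have h₀ : Fin.cast (two_mul m).symm (Fin.castAdd m a) = stackEquiv m (a, 0) := Fin.ext (by simp)
  obtain ⟨⟨a', b⟩, rfl⟩ := (interleaveEquiv m).surjective r
  simp only [h₁, h₀, interleavingBlock, submatrix_apply, Equiv.symm_apply_apply,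
    kronecker_apply, pairDiagonalizer_apply_one, map_mul, one_apply]
  split_ifs <;> simp

section
variable (α β' : ℕ) (p : Fin α → ℕ) (q : Fin β' → ℕ)

lemma realJordanForm_eq_fromBlocks (μ : Fin α → ℝ) (lam : Fin β' → ℂ) :
    realJordanForm α β' p q μ lam =
      fromBlocks (complexJordanForm α β' p q μ lam).toBlocks₁₁ 0 0
        (blockDiagonal' fun k => realPairBlock (q k) (lam k)) := by
  ext (⟨k, i⟩ | ⟨k, i⟩) (⟨k', j⟩ | ⟨k', j⟩)
  · simp [realJordanForm, complexJordanForm, toBlocks₁₁]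
  · simp [realJordanForm]
  · simp [realJordanForm]
  · obtain rfl | hk := eq_or_ne k k'
    · obtain ⟨⟨a, b⟩, rfl⟩ := (interleaveEquiv (q k)).surjective i
      obtain ⟨⟨a', b'⟩, rfl⟩ := (interleaveEquiv (q k)).surjective j
      fin_cases b <;> fin_cases b' <;>
        simp [realJordanForm, realPairBlock, realCanonicalBlock, shiftMatrix, one_apply] <;> grind
    · simp [realJordanForm, blockDiagonal'_apply_ne _ _ _ hk, hk]

lemma complexJordanForm_eq_fromBlocks (μ : Fin α → ℝ) (lam : Fin β' → ℂ) :
    complexJordanForm α β' p q μ lam =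
      fromBlocks (complexJordanForm α β' p q μ lam).toBlocks₁₁ 0 0
        (blockDiagonal' fun k => complexPairBlock (q k) (lam k)) := by
  ext (⟨k, i⟩ | ⟨k, i⟩) (⟨k', j⟩ | ⟨k', j⟩)
  · rfl
  · simp [complexJordanForm]
  · simp [complexJordanForm]
  · obtain rfl | hk := eq_or_ne k k'
    · obtain ⟨⟨a, b⟩, rfl⟩ := (stackEquiv (q k)).surjective i
      obtain ⟨⟨a', b'⟩, rfl⟩ := (stackEquiv (q k)).surjective j
      fin_cases b <;> fin_cases b' <;>
        simp [complexJordanForm, complexPairBlock, shiftMatrix, one_apply] <;> grind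
    · simp [complexJordanForm, blockDiagonal'_apply_ne _ _ _ hk, hk]

lemma sipForm_eq_fromBlocks (ε : Fin α → ℝ) :
    sipForm α β' p q ε =
      fromBlocks (sipForm α β' p q ε).toBlocks₁₁ 0 0 (blockDiagonal' fun k => sip (2 * q k)) := by
  ext (⟨k, i⟩ | ⟨k, i⟩) (⟨k', j⟩ | ⟨k', j⟩)
  · rfl
  · simp [sipForm]
  · simp [sipForm]
  · obtain rfl | hk := eq_or_ne k k'
    · simp [sipForm, sip]
    · simp [sipForm, blockDiagonal'_apply_ne _ _ _ hk, hk]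

def IsIConjSymmetric (N : Matrix (JordanIdx α β' p q) (JordanIdx α β' p q) ℂ) : Prop :=
  ∀ (k : Fin β') (j : Fin (q k)) (i : JordanIdx α β' p q),
    N i (Sum.inr ⟨k, Fin.cast (two_mul _).symm (Fin.natAdd (q k) j)⟩) =
      I * (starRingEnd ℂ) (N i (Sum.inr ⟨k, Fin.cast (two_mul _).symm (Fin.castAdd (q k) j)⟩))

noncomputable def interleavingMatrix : Matrix (JordanIdx α β' p q) (JordanIdx α β' p q) ℂ :=
  fromBlocks 1 0 0 (blockDiagonal' fun k => interleavingBlock (q k))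

lemma realJordanForm_mul_interleavingMatrix (μ : Fin α → ℝ) (lam : Fin β' → ℂ) :
    realJordanForm α β' p q μ lam * interleavingMatrix α β' p q =
      interleavingMatrix α β' p q * complexJordanForm α β' p q μ lam := by
  -- `complexJordanForm` first: the decomposition of `realJordanForm` mentions it.
  rw [complexJordanForm_eq_fromBlocks, realJordanForm_eq_fromBlocks, interleavingMatrix,
    fromBlocks_multiply, fromBlocks_multiply, ← blockDiagonal'_mul, ← blockDiagonal'_mul]
  simp only [Matrix.mul_one, Matrix.one_mul, Matrix.mul_zero, Matrix.zero_mul, add_zero,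
    zero_add, realPairBlock_mul_interleavingBlock]

lemma interleavingMatrix_mul_conjTranspose :
    interleavingMatrix α β' p q * (interleavingMatrix α β' p q)ᴴ = 1 := by
  rw [interleavingMatrix, fromBlocks_conjTranspose, blockDiagonal'_conjTranspose,
    fromBlocks_multiply, ← blockDiagonal'_mul]
  simp only [conjTranspose_one, conjTranspose_zero, Matrix.mul_one, Matrix.mul_zero,
    Matrix.zero_mul, add_zero, zero_add, interleavingBlock_mul_conjTranspose]
  rw [← Pi.one_def, blockDiagonal'_one, fromBlocks_one]

lemma interleavingMatrix_conjTranspose_mul_sipForm_mul (ε : Fin α → ℝ) :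
    (interleavingMatrix α β' p q)ᴴ * sipForm α β' p q ε * interleavingMatrix α β' p q =
      sipForm α β' p q ε := by
  rw [sipForm_eq_fromBlocks, interleavingMatrix, fromBlocks_conjTranspose,
    blockDiagonal'_conjTranspose, fromBlocks_multiply, fromBlocks_multiply]
  simp only [conjTranspose_one, conjTranspose_zero, Matrix.mul_one, Matrix.one_mul,
    Matrix.mul_zero, Matrix.zero_mul, add_zero, zero_add, ← blockDiagonal'_mul,
    interleavingBlock_conjTranspose_mul_sip_mul]

lemma interleavingMatrix_isIConjSymmetric :
    IsIConjSymmetric α β' p q (interleavingMatrix α β' p q) := by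
  rintro k j (x | ⟨k', r⟩)
  · simp [interleavingMatrix]
  · obtain rfl | hk := eq_or_ne k' k
    · simpa [interleavingMatrix] using interleavingBlock_apply_add (q k') r j
    · simp [interleavingMatrix, blockDiagonal'_apply_ne _ _ _ hk]

end

lemma IsIConjSymmetric.ofReal_mul {α β' : ℕ} {p : Fin α → ℕ} {q : Fin β' → ℕ}
    {N : Matrix (JordanIdx α β' p q) (JordanIdx α β' p q) ℂ} (hN : IsIConjSymmetric α β' p q N)
    (R : Matrix (JordanIdx α β' p q) (JordanIdx α β' p q) ℝ) :
    IsIConjSymmetric α β' p q (R.map ofReal * N) := by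
  intro k j i
  simp only [mul_apply, map_sum, Finset.mul_sum, hN k j, map_mul, map_apply, conj_ofReal]
  exact Finset.sum_congr rfl fun x _ => by ring

lemma conjTranspose_map_ofReal {m n : Type*} (R : Matrix m n ℝ) :
    (R.map ofReal)ᴴ = (R.map ofReal)ᵀ := by
  ext i j
  simp

lemma inv_mul_mul_eq_of_mul_eq {n K : Type*} [Fintype n] [DecidableEq n] [CommRing K]
    {S X Y : Matrix n n K} (hS : IsUnit S) (h : X * S = S * Y) : S⁻¹ * X * S = Y := by
  rw [Matrix.mul_assoc, h, nonsing_inv_mul_cancel_left _ _ ((isUnit_iff_isUnit_det S).mp hS)]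

/-- Existence of an i-FOCS basis, assuming the real canonical form: if a real
`H`-selfadjoint matrix `A` (with `H` real symmetric invertible) is affiliated to
`(J_R, P)` via a real invertible matrix `R`, then there is a complex invertible `N`
affiliating `(A, H)` to `(J, P)` which is moreover `i`-conjugate symmetric: in each
non-real pair of blocks, the Jordan chain at `conj lam` is `i` times the entrywise
conjugate of the chain at `lam`. -/
theorem stmt18 (α β' : ℕ) (p : Fin α → ℕ) (q : Fin β' → ℕ)
    (μ : Fin α → ℝ) (lam : Fin β' → ℂ)
    (ε : Fin α → ℝ)
    (A H : Matrix (JordanIdx α β' p q) (JordanIdx α β' p q) ℝ)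
    (hRC : ∃ R : Matrix (JordanIdx α β' p q) (JordanIdx α β' p q) ℝ, IsUnit R ∧
      (R.map Complex.ofReal)⁻¹ * A.map Complex.ofReal * R.map Complex.ofReal =
        realJordanForm α β' p q μ lam ∧
      (R.map Complex.ofReal)ᵀ * H.map Complex.ofReal * R.map Complex.ofReal =
        sipForm α β' p q ε) :
    ∃ N : Matrix (JordanIdx α β' p q) (JordanIdx α β' p q) ℂ, IsUnit N ∧
      N⁻¹ * A.map Complex.ofReal * N = complexJordanForm α β' p q μ lam ∧
      Nᴴ * H.map Complex.ofReal * N = sipForm α β' p q ε ∧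
      ∀ (k : Fin β') (j : Fin (q k)) (i : JordanIdx α β' p q),
        N i (Sum.inr ⟨k, ⟨q k + (j:ℕ), by have := j.isLt; omega⟩⟩) =
          I * (starRingEnd ℂ) (N i (Sum.inr ⟨k, ⟨(j:ℕ), by have := j.isLt; omega⟩⟩)) := by
  obtain ⟨R, hR, hRA, hRH⟩ := hRC
  have hS : IsUnit (interleavingMatrix α β' p q) := (isUnit_iff_isUnit_det _).mpr
    (isUnit_det_of_right_inverse (interleavingMatrix_mul_conjTranspose α β' p q))
  refine ⟨R.map ofReal * interleavingMatrix α β' p q, (hR.map ofRealHom.mapMatrix).mul hS,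
    ?_, ?_, (interleavingMatrix_isIConjSymmetric α β' p q).ofReal_mul R⟩
  · rw [Matrix.mul_inv_rev, ← inv_mul_mul_eq_of_mul_eq hS
      (realJordanForm_mul_interleavingMatrix α β' p q μ lam), ← hRA]
    simp only [Matrix.mul_assoc]
  · rw [conjTranspose_mul, conjTranspose_map_ofReal,
      ← interleavingMatrix_conjTranspose_mul_sipForm_mul α β' p q ε, ← hRH]
    simp only [Matrix.mul_assoc]
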